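/- Let V be a finite type, c : V → V → ℝ≥0 a capacity function, S ⊆ V a subset, P ≥ 1 an integer, and s, t distinct vertices of V with s ∉ S and t ∉ S. Assume that c u v = 0 whenever u ∉ S and v ∉ S. Let f be an s-t flow of c with value μ. Then the function F on the P-fold replication c_P of S defined by F u v = f u v for u, v ∉ S; F u (v,i) = f u v and F (v,i) u = f v u for u ∉ S, v ∈ S, i : Fin P; F (u,i) (v,i) = f u v for u, v ∈ S, i : Fin P; and F (u,i) (v,j) = 0 for i ≠ j, is a valid s-t flow of c_P with value P · μ. -/
import Mathlib


/-!
STATEMENT 6: If `c u v = 0` whenever `u ∉ S` and `v ∉ S`, and `f` is an s-t flow of `c`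
with value `μ`, then replicating `f` along the P-fold replication of `S` yields a valid
s-t flow of `c_P` with value `P · μ`.
-/

open Finset

attribute [local instance] Classical.propDecidable

noncomputable section

/-- `f` is an `s`-`t` flow for the capacity function `c`. -/
def IsFlow {W : Type*} [Fintype W] (c : W → W → NNReal) (s t : W) (f : W → W → ℝ) : Prop :=
  (∀ u v, 0 ≤ f u v ∧ f u v ≤ (c u v : ℝ)) ∧
  ∀ v, v ≠ s → v ≠ t → (∑ u, f u v) = (∑ w, f v w)

/-- The value of a flow `f` with source `s`. -/
def flowValue {W : Type*} [Fintype W] (f : W → W → ℝ) (s : W) : ℝ :=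
  (∑ w, f s w) - (∑ u, f u s)

/-- The capacity function of the `P`-fold replication of the subset `S`. -/
def repCap {V : Type*} (c : V → V → NNReal) (S : Set V) (P : ℕ) :
    ({v : V // v ∉ S} ⊕ (↥S × Fin P)) → ({v : V // v ∉ S} ⊕ (↥S × Fin P)) → NNReal
  | Sum.inl u, Sum.inl v => c u.1 v.1
  | Sum.inl u, Sum.inr (v, _) => c u.1 v.1
  | Sum.inr (v, _), Sum.inl u => c v.1 u.1
  | Sum.inr (u, i), Sum.inr (v, j) => if i = j then c u.1 v.1 else 0

/-- The replicated flow `F` on the `P`-fold replication of `S` induced by `f`. -/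
def liftFlow {V : Type*} (S : Set V) (P : ℕ) (f : V → V → ℝ) :
    ({v : V // v ∉ S} ⊕ (↥S × Fin P)) → ({v : V // v ∉ S} ⊕ (↥S × Fin P)) → ℝ
  | Sum.inl u, Sum.inl v => f u.1 v.1
  | Sum.inl u, Sum.inr (v, _) => f u.1 v.1
  | Sum.inr (v, _), Sum.inl u => f v.1 u.1
  | Sum.inr (u, i), Sum.inr (v, j) => if i = j then f u.1 v.1 else 0

theorem liftFlow_isFlow_and_value {V : Type*} [Fintype V]
    (c : V → V → NNReal) (S : Set V) (P : ℕ) (hP : 1 ≤ P)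
    (s t : V) (hst : s ≠ t) (hs : s ∉ S) (ht : t ∉ S)
    (hzero : ∀ u v, u ∉ S → v ∉ S → c u v = 0)
    (f : V → V → ℝ) (hf : IsFlow c s t f) (μ : ℝ) (hμ : flowValue f s = μ) :
    IsFlow (repCap c S P) (Sum.inl ⟨s, hs⟩) (Sum.inl ⟨t, ht⟩) (liftFlow S P f) ∧
      flowValue (liftFlow S P f) (Sum.inl ⟨s, hs⟩) = (P : ℝ) * μ := by
  classical
  obtain ⟨hbd, hcons⟩ := hf
  -- f vanishes outside S × S
  have hf0 : ∀ u v, u ∉ S → v ∉ S → f u v = 0 := by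
    intro u v hu hv
    have h1 := (hbd u v).1
    have h2 := (hbd u v).2
    rw [hzero u v hu hv] at h2
    simpa using le_antisymm h2 h1
  -- splitting sums over V into S and Sᶜ
  have hsplit : ∀ g : V → ℝ,
      (∑ u : ↥S, g u.1) + (∑ u : {v : V // v ∉ S}, g u.1) = ∑ u, g u := by
    intro g
    exact Fintype.sum_subtype_add_sum_subtype (fun v => v ∈ S) g
  -- sums of liftFlow into / out of an inl vertex
  have hin_inl : ∀ x : {v : V // v ∉ S},
      (∑ u, liftFlow S P f u (Sum.inl x)) = (P : ℝ) * ∑ u : ↥S, f u.1 x.1 := by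
    intro x
    rw [Fintype.sum_sum_type]
    have h1 : (∑ u : {v : V // v ∉ S}, liftFlow S P f (Sum.inl u) (Sum.inl x)) = 0 := by
      apply Finset.sum_eq_zero
      intro u _
      exact hf0 u.1 x.1 u.2 x.2
    have h2 : (∑ p : ↥S × Fin P, liftFlow S P f (Sum.inr p) (Sum.inl x))
        = (P : ℝ) * ∑ u : ↥S, f u.1 x.1 := by
      rw [Fintype.sum_prod_type]
      simp [liftFlow, Finset.mul_sum, mul_comm]
    rw [h1, h2, zero_add]
  have hout_inl : ∀ x : {v : V // v ∉ S},
      (∑ w, liftFlow S P f (Sum.inl x) w) = (P : ℝ) * ∑ w : ↥S, f x.1 w.1 := by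
    intro x
    rw [Fintype.sum_sum_type]
    have h1 : (∑ u : {v : V // v ∉ S}, liftFlow S P f (Sum.inl x) (Sum.inl u)) = 0 := by
      apply Finset.sum_eq_zero
      intro u _
      exact hf0 x.1 u.1 x.2 u.2
    have h2 : (∑ p : ↥S × Fin P, liftFlow S P f (Sum.inl x) (Sum.inr p))
        = (P : ℝ) * ∑ w : ↥S, f x.1 w.1 := by
      rw [Fintype.sum_prod_type]
      simp [liftFlow, Finset.mul_sum, mul_comm]
    rw [h1, h2, zero_add]
  -- original sums over S only
  have horig_in : ∀ x : V, x ∉ S → (∑ u : ↥S, f u.1 x) = ∑ u, f u x := by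
    intro x hx
    rw [← hsplit (fun u => f u x)]
    have : (∑ u : {v : V // v ∉ S}, f u.1 x) = 0 :=
      Finset.sum_eq_zero fun u _ => hf0 u.1 x u.2 hx
    rw [this, add_zero]
  have horig_out : ∀ x : V, x ∉ S → (∑ w : ↥S, f x w.1) = ∑ w, f x w := by
    intro x hx
    rw [← hsplit (fun w => f x w)]
    have : (∑ w : {v : V // v ∉ S}, f x w.1) = 0 :=
      Finset.sum_eq_zero fun w _ => hf0 x w.1 hx w.2
    rw [this, add_zero]
  constructor
  · constructor
    · -- capacity constraints
      rintro (u | ⟨u, i⟩) (v | ⟨v, j⟩)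
      · exact ⟨(hbd u.1 v.1).1, (hbd u.1 v.1).2⟩
      · exact ⟨(hbd u.1 v.1).1, (hbd u.1 v.1).2⟩
      · exact ⟨(hbd u.1 v.1).1, (hbd u.1 v.1).2⟩
      · simp only [liftFlow, repCap]
        by_cases h : i = j
        · simp [h]; exact ⟨(hbd u.1 v.1).1, (hbd u.1 v.1).2⟩
        · simp [h]
    · -- conservation
      rintro (v | ⟨v, i⟩) hvs hvt
      · have hv1 : v.1 ≠ s := fun h => hvs (congrArg Sum.inl (Subtype.ext h))
        have hv2 : v.1 ≠ t := fun h => hvt (congrArg Sum.inl (Subtype.ext h))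
        have hc := hcons v.1 hv1 hv2
        rw [hin_inl v, hout_inl v]
        rw [horig_in v.1 v.2, horig_out v.1 v.2, hc]
      · have hc := hcons v.1 (fun h => hs (h ▸ v.2)) (fun h => ht (h ▸ v.2))
        have hin : (∑ u, liftFlow S P f u (Sum.inr (v, i))) = ∑ u, f u v.1 := by
          rw [Fintype.sum_sum_type, Fintype.sum_prod_type]
          have h2 : (∑ u : ↥S, ∑ j : Fin P, liftFlow S P f (Sum.inr (u, j)) (Sum.inr (v, i)))
              = ∑ u : ↥S, f u.1 v.1 := by
            apply Finset.sum_congr rfl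
            intro u _
            simp [liftFlow]
          show (∑ u : {x : V // x ∉ S}, f u.1 v.1) + _ = _
          rw [h2]
          rw [add_comm, hsplit (fun u => f u v.1)]
        have hout : (∑ w, liftFlow S P f (Sum.inr (v, i)) w) = ∑ w, f v.1 w := by
          rw [Fintype.sum_sum_type, Fintype.sum_prod_type]
          have h2 : (∑ w : ↥S, ∑ j : Fin P, liftFlow S P f (Sum.inr (v, i)) (Sum.inr (w, j)))
              = ∑ w : ↥S, f v.1 w.1 := by
            apply Finset.sum_congr rfl
            intro w _
            simp [liftFlow]
          show (∑ w : {x : V // x ∉ S}, f v.1 w.1) + _ = _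
          rw [h2]
          rw [add_comm, hsplit (fun w => f v.1 w)]
        rw [hin, hout, hc]
  · -- value
    unfold flowValue
    rw [hin_inl ⟨s, hs⟩, hout_inl ⟨s, hs⟩]
    rw [horig_in s hs, horig_out s hs, ← mul_sub, ← hμ]
    rfl

end
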